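/- Let R be a Noetherian ring of finite Krull dimension and d a natural number. Then len R = ω^d if and only if R is an integral domain of Krull dimension d, where len R is the ordinal length of R as a module over itself. -/

import Mathlib

open Ordinal

/-- The ordinal length of a Noetherian module: the rank of the zero submodule in the
well-founded order of submodules under reverse inclusion. -/
noncomputable def moduleLength (R M : Type*) [Ring R] [AddCommGroup M] [Module R M]
    [IsNoetherian R M] : Ordinal :=
  IsWellFounded.rank (α := Submodule R M) (· > ·) ⊥

universe u

/-!
Along a short exact sequence the ordinal length is bounded above by the natural (Hessenberg)
sum and below by the ordinal sum of the outer terms. A noetherian induction over ideals, which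
splits a non-prime ideal `I` with `a * b ∈ I`, `a, b ∉ I` along
`0 → R ⧸ (I : a) → R ⧸ I → R ⧸ (I + (a)) → 0`, shows `len R < ω ^ (n + 1)` when
`dim R ≤ n`, and `len (R ⧸ P) ≤ ω ^ n` for a prime `P`. Conversely, for a nonzero `x` in a
domain `S`, `len (S ⧸ x S) + len S ≤ len S`, so `len (S ⧸ x S) * ω ≤ len S`; along a chain
of primes of length `n` this gives `ω ^ n ≤ len R`. If `len R = ω ^ d`, these bounds force
`dim R = d`, and a chain of length `d` starts at the zero ideal, since a nonzero first prime `p`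
would give `len R ≥ len (R ⧸ p) + len p ≥ ω ^ d + 1`.
-/

namespace Ordinal

/-- The natural (Hessenberg) sum of ordinals. -/
noncomputable def nadd : Ordinal.{u} → Ordinal.{u} → Ordinal.{u}
  | a, b =>
    max (⨆ x : Set.Iio a, Order.succ (nadd x.1 b)) (⨆ y : Set.Iio b, Order.succ (nadd a y.1))
termination_by a b => (a, b)
decreasing_by
  · exact Prod.Lex.left _ _ x.2
  · exact Prod.Lex.right _ y.2

infixl:65 " ♯ " => nadd

theorem nadd_le_iff {a b c : Ordinal.{u}} :
    a ♯ b ≤ c ↔ (∀ a' < a, a' ♯ b < c) ∧ ∀ b' < b, a ♯ b' < c := by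
  rw [nadd, max_le_iff, Ordinal.iSup_le_iff, Ordinal.iSup_le_iff]
  simp only [Order.succ_le_iff, Subtype.forall, Set.mem_Iio]

theorem nadd_strictMono_left (b : Ordinal.{u}) : StrictMono (· ♯ b) :=
  fun a _ h => lt_of_not_ge fun hle => (nadd_le_iff.1 hle).1 a h |>.false

theorem nadd_strictMono_right (a : Ordinal.{u}) : StrictMono (a ♯ ·) :=
  fun b _ h => lt_of_not_ge fun hle => (nadd_le_iff.1 hle).2 b h |>.false

theorem nadd_lt_nadd_of_lt_of_le {a b c d : Ordinal.{u}} (h₁ : a < b) (h₂ : c ≤ d) :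
    a ♯ c < b ♯ d :=
  (nadd_strictMono_left c h₁).trans_le ((nadd_strictMono_right b).monotone h₂)

theorem nadd_lt_nadd_of_le_of_lt {a b c d : Ordinal.{u}} (h₁ : a ≤ b) (h₂ : c < d) :
    a ♯ c < b ♯ d :=
  ((nadd_strictMono_left c).monotone h₁).trans_lt (nadd_strictMono_right b h₂)

theorem nadd_comm (a b : Ordinal.{u}) : a ♯ b = b ♯ a := by
  induction a using WellFoundedLT.induction generalizing b with | _ a iha =>
  induction b using WellFoundedLT.induction with | _ b ihb =>
  refine le_antisymm (nadd_le_iff.2 ⟨fun a' h => ?_, fun b' h => ?_⟩)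
    (nadd_le_iff.2 ⟨fun b' h => ?_, fun a' h => ?_⟩)
  · rw [iha a' h]; exact nadd_strictMono_right b h
  · rw [ihb b' h]; exact nadd_strictMono_left a h
  · rw [← ihb b' h]; exact nadd_strictMono_right a h
  · rw [← iha a' h]; exact nadd_strictMono_left b h

theorem exists_eq_mul_add_of_lt_mul_add {c a r : Ordinal.{u}} {m : ℕ} (hr : r < c)
    (ha : a < c * m + r) :
    ∃ (m' : ℕ) (r' : Ordinal.{u}),
      r' < c ∧ a = c * m' + r' ∧ (m' < m ∨ m' = m ∧ r' < r) := by
  have hc : c ≠ 0 := (zero_le.trans_lt hr).ne'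
  have ha' : a < c * (m + 1 : ℕ) :=
    ha.trans_le <| by rw [Nat.cast_succ, mul_add_one]; gcongr
  obtain ⟨m', hm'⟩ := lt_omega0.1 <| (lt_mul_iff_div_lt hc).1 <| ha'.trans_le <| by
    gcongr; exact (natCast_lt_omega0 _).le
  have hdecomp : a = c * m' + a % c := by rw [← hm', div_add_mod]
  have hm'm : m' < m + 1 := by exact_mod_cast hm' ▸ (lt_mul_iff_div_lt hc).1 ha'
  refine ⟨m', a % c, mod_lt a hc, hdecomp, ?_⟩
  rcases (Nat.lt_succ_iff.1 hm'm).lt_or_eq with h | rfl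
  · exact Or.inl h
  · exact Or.inr ⟨rfl, (add_lt_add_iff_left _).1 (hdecomp ▸ ha)⟩

theorem mul_nat_add_nadd_lt {c r r' s : Ordinal.{u}} (hc : ∀ x < c, ∀ y < c, x ♯ y < c)
    {m m' : ℕ} (k : ℕ) (hr' : r' < c) (hs : s < c) (h : m' < m ∨ m' = m ∧ r' < r) :
    c * (m' + k : ℕ) + (r' ♯ s) < c * (m + k : ℕ) + (r ♯ s) := by
  rcases h with h | ⟨rfl, h⟩
  · calc c * (m' + k : ℕ) + (r' ♯ s) < c * (m' + k : ℕ) + c := by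
          gcongr; exact hc _ hr' _ hs
      _ = c * (m' + k + 1 : ℕ) := by rw [Nat.cast_succ, mul_add_one]
      _ ≤ c * (m + k : ℕ) := by
          gcongr c * ?_; exact_mod_cast (by omega : m' + k + 1 ≤ m + k)
      _ ≤ c * (m + k : ℕ) + (r ♯ s) := le_self_add
  · gcongr
    exact nadd_strictMono_left s h

theorem mul_nat_add_nadd_mul_nat_add_le {c : Ordinal.{u}} (hc : ∀ x < c, ∀ y < c, x ♯ y < c)
    (m k : ℕ) {r s : Ordinal.{u}} (hr : r < c) (hs : s < c) :
    (c * m + r) ♯ (c * k + s) ≤ c * (m + k : ℕ) + (r ♯ s) := by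
  -- The induction runs over the right-hand side, which is symmetric in the two summands, so
  -- the case of a smaller left summand also covers that of a smaller right summand.
  induction hμ : c * (m + k : ℕ) + (r ♯ s) using WellFoundedLT.induction
    generalizing m k r s with | _ μ ih =>
  have left : ∀ (m k : ℕ) (r s : Ordinal.{u}), r < c → s < c →
      c * (m + k : ℕ) + (r ♯ s) = μ → ∀ a < c * m + r, a ♯ (c * k + s) < μ := by
    intro m k r s hr hs hμ a ha
    obtain ⟨m', r', hr', rfl, hlex⟩ := exists_eq_mul_add_of_lt_mul_add hr ha
    have hlt := hμ ▸ mul_nat_add_nadd_lt hc k hr' hs hlex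
    exact (ih _ hlt m' k hr' hs rfl).trans_lt hlt
  refine nadd_le_iff.2 ⟨left m k r s hr hs hμ, fun b hb => ?_⟩
  rw [nadd_comm]
  refine left k m s r hs hr ?_ b hb
  rw [← hμ, Nat.add_comm, nadd_comm]

theorem nadd_lt_omega0_opow {n : ℕ} {a b : Ordinal.{u}} (ha : a < ω ^ (n : Ordinal))
    (hb : b < ω ^ (n : Ordinal)) : a ♯ b < ω ^ (n : Ordinal) := by
  induction n generalizing a b with
  | zero =>
    simp only [Nat.cast_zero, opow_zero, Order.lt_one_iff] at ha hb ⊢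
    subst ha hb
    exact nonpos_iff_eq_zero.1 (nadd_le_iff.2 ⟨by simp, by simp⟩)
  | succ n ih =>
    set c := ω ^ (n : Ordinal)
    have hc : c ≠ 0 := (opow_pos _ omega0_pos).ne'
    rw [Nat.cast_succ, opow_add_one] at ha hb ⊢
    obtain ⟨m, hm⟩ := lt_omega0.1 <| (lt_mul_iff_div_lt hc).1 ha
    obtain ⟨k, hk⟩ := lt_omega0.1 <| (lt_mul_iff_div_lt hc).1 hb
    rw [← div_add_mod a c, ← div_add_mod b c, hm, hk]
    calc (c * m + a % c) ♯ (c * k + b % c) ≤ c * (m + k : ℕ) + (a % c ♯ b % c) :=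
          mul_nat_add_nadd_mul_nat_add_le (fun x hx y hy => ih hx hy) m k (mod_lt a hc)
            (mod_lt b hc)
      _ < c * (m + k : ℕ) + c := by gcongr; exact ih (mod_lt a hc) (mod_lt b hc)
      _ = c * (m + k + 1 : ℕ) := by rw [Nat.cast_succ, mul_add_one]
      _ < c * ω := by gcongr; exact natCast_lt_omega0 _

end Ordinal

section Rank

variable {α β γ : Type u} [PartialOrder α] [PartialOrder β] [PartialOrder γ]
  [WellFoundedGT α] [WellFoundedGT β] [WellFoundedGT γ]

theorem IsWellFounded.rank_gt_le_iff {a : α} {o : Ordinal.{u}} :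
    IsWellFounded.rank (· > ·) a ≤ o ↔
      ∀ b, a < b → IsWellFounded.rank (· > ·) b < o := by
  rw [IsWellFounded.rank_eq, Ordinal.iSup_le_iff]
  simp only [Order.succ_le_iff, Subtype.forall]

theorem OrderEmbedding.rank_gt_apply_of_isUpperSet (f : α ↪o β) (hf : IsUpperSet (Set.range f))
    (a : α) : IsWellFounded.rank (· > ·) (f a) = IsWellFounded.rank (· > ·) a := by
  induction a using WellFoundedGT.induction with | _ a ih =>
  refine le_antisymm (IsWellFounded.rank_gt_le_iff.2 fun b hb => ?_)
    (IsWellFounded.rank_gt_le_iff.2 fun a' ha' => ?_)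
  · obtain ⟨a', rfl⟩ := hf hb.le ⟨a, rfl⟩
    have ha' : a < a' := f.lt_iff_lt.1 hb
    exact ih a' ha' ▸ IsWellFounded.rank_lt_of_rel ha'
  · exact ih a' ha' ▸ IsWellFounded.rank_lt_of_rel (f.lt_iff_lt.2 ha')

theorem OrderIso.rank_gt_apply (e : α ≃o β) (a : α) :
    IsWellFounded.rank (· > ·) (e a) = IsWellFounded.rank (· > ·) a :=
  e.toOrderEmbedding.rank_gt_apply_of_isUpperSet (by simp [isUpperSet_univ]) a

theorem rank_gt_le_nadd_of_strictMono {f : α → β × γ} (hf : StrictMono f) (a : α) :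
    IsWellFounded.rank (· > ·) a ≤
      IsWellFounded.rank (· > ·) (f a).1 ♯ IsWellFounded.rank (· > ·) (f a).2 := by
  induction a using WellFoundedGT.induction with | _ a ih =>
  refine IsWellFounded.rank_gt_le_iff.2 fun b hab => (ih b hab).trans_lt ?_
  rcases Prod.lt_iff.1 (hf hab) with ⟨h₁, h₂⟩ | ⟨h₁, h₂⟩
  · exact nadd_lt_nadd_of_lt_of_le (WellFoundedGT.rank_strictAnti h₁)
      (WellFoundedGT.rank_strictAnti.antitone h₂)
  · exact nadd_lt_nadd_of_le_of_lt (WellFoundedGT.rank_strictAnti.antitone h₁)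
      (WellFoundedGT.rank_strictAnti h₂)

theorem add_rank_gt_le_of_strictMono {f : β → α} (hf : StrictMono f) {z : α}
    (hz : ∀ b, f b ≤ z) (b : β) :
    IsWellFounded.rank (· > ·) z + IsWellFounded.rank (· > ·) b ≤
      IsWellFounded.rank (· > ·) (f b) := by
  induction b using WellFoundedGT.induction with | _ b ih =>
  have hzb := WellFoundedGT.rank_strictAnti.antitone (hz b)
  rw [← Ordinal.le_sub_of_le hzb]
  exact IsWellFounded.rank_gt_le_iff.2 fun b' hb' =>
    Ordinal.lt_sub.2 <| (ih b' hb').trans_lt (WellFoundedGT.rank_strictAnti (hf hb'))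

end Rank

section ModuleLength

variable {R M M' : Type u} [Ring R] [AddCommGroup M] [Module R M] [IsNoetherian R M]
  [AddCommGroup M'] [Module R M'] [IsNoetherian R M']

theorem LinearEquiv.moduleLength_eq (e : M ≃ₗ[R] M') :
    moduleLength R M = moduleLength R M' := by
  have := (Submodule.orderIsoMapComap e).rank_gt_apply ⊥
  rw [Submodule.orderIsoMapComap_apply, Submodule.map_bot] at this
  exact this.symm

theorem moduleLength_quotient (N : Submodule R M) :
    moduleLength R (M ⧸ N) = IsWellFounded.rank (· > ·) N := by
  have hup : IsUpperSet (Set.range (Submodule.comapMkQOrderEmbedding N)) := by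
    rintro _ K' hK ⟨K, rfl⟩
    refine ⟨K'.map N.mkQ, ?_⟩
    rw [Submodule.comapMkQOrderEmbedding_eq, Submodule.comap_map_mkQ, sup_eq_right]
    exact (Submodule.le_comap_mkQ N K).trans hK
  have := (Submodule.comapMkQOrderEmbedding N).rank_gt_apply_of_isUpperSet hup ⊥
  rw [Submodule.comapMkQOrderEmbedding_eq, Submodule.comap_bot, Submodule.ker_mkQ] at this
  exact this.symm

theorem moduleLength_quotient_le_iff {N : Submodule R M} {o : Ordinal.{u}} :
    moduleLength R (M ⧸ N) ≤ o ↔ ∀ N', N < N' → moduleLength R (M ⧸ N') < o := by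
  simp only [moduleLength_quotient]
  exact IsWellFounded.rank_gt_le_iff

theorem moduleLength_quotient_le (N : Submodule R M) :
    moduleLength R (M ⧸ N) ≤ moduleLength R M :=
  (moduleLength_quotient N).trans_le (WellFoundedGT.rank_strictAnti.antitone bot_le)

theorem moduleLength_quotient_antitone {N N' : Submodule R M} (h : N ≤ N') :
    moduleLength R (M ⧸ N') ≤ moduleLength R (M ⧸ N) := by
  simpa only [moduleLength_quotient] using WellFoundedGT.rank_strictAnti.antitone h

theorem moduleLength_eq_zero [Subsingleton M] : moduleLength R M = 0 :=
  nonpos_iff_eq_zero.1 <| IsWellFounded.rank_gt_le_iff.2 fun _ h =>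
    (h.ne (Subsingleton.elim _ _)).elim

theorem one_le_moduleLength [Nontrivial M] : 1 ≤ moduleLength R M :=
  Order.one_le_iff_pos.2 <|
    (WellFoundedGT.rank_strictAnti (bot_lt_top : (⊥ : Submodule R M) < ⊤)).trans_le' zero_le

theorem moduleLength_le_nadd (N : Submodule R M) :
    moduleLength R M ≤ moduleLength R N ♯ moduleLength R (M ⧸ N) := by
  let f : Submodule R M → Submodule R N × Submodule R M :=
    fun K => ((Submodule.mapIic N).symm ⟨K ⊓ N, Set.mem_Iic.2 inf_le_right⟩, K ⊔ N)
  have hf : StrictMono f := fun K K' h => by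
    obtain ⟨h₁, h₂⟩ | ⟨h₁, h₂⟩ := Prod.lt_iff.1 (strictMono_inf_prod_sup (z := N) h)
    · exact Prod.lt_iff.2 (Or.inl ⟨(Submodule.mapIic N).symm.lt_iff_lt.2 h₁, h₂⟩)
    · exact Prod.lt_iff.2 (Or.inr ⟨(Submodule.mapIic N).symm.le_iff_le.2 h₁, h₂⟩)
  have hf_bot : f ⊥ = (⊥, N) :=
    Prod.ext ((Submodule.mapIic N).symm_apply_eq.2 (Subtype.ext (by simp))) (bot_sup_eq N)
  have := rank_gt_le_nadd_of_strictMono hf ⊥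
  rw [hf_bot] at this
  rwa [moduleLength_quotient]

theorem moduleLength_quotient_add_moduleLength_le (N : Submodule R M) :
    moduleLength R (M ⧸ N) + moduleLength R N ≤ moduleLength R M := by
  have := add_rank_gt_le_of_strictMono (Submodule.MapSubtype.orderEmbedding N).strictMono
    (fun K => Submodule.map_subtype_le N K) ⊥
  rwa [Submodule.map_subtype_embedding_eq, Submodule.map_bot, ← moduleLength_quotient] at this

theorem LinearMap.moduleLength_quotient_range_mul_omega0_le {f : M →ₗ[R] M}
    (hf : Function.Injective f) :
    moduleLength R (M ⧸ LinearMap.range f) * ω ≤ moduleLength R M := by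
  rw [← add_le_right_iff_mul_omega0_le]
  calc _ = moduleLength R (M ⧸ LinearMap.range f) + moduleLength R (LinearMap.range f) := by
        rw [(LinearEquiv.ofInjective f hf).moduleLength_eq]
    _ ≤ moduleLength R M := moduleLength_quotient_add_moduleLength_le _

end ModuleLength

theorem moduleLength_eq_of_surjective_algebraMap {R A M : Type u} [CommRing R] [Ring A]
    [Algebra R A] [AddCommGroup M] [Module A M] [Module R M] [IsScalarTower R A M]
    [IsNoetherian R M] [IsNoetherian A M] (h : Function.Surjective (algebraMap R A)) :
    moduleLength R M = moduleLength A M := by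
  have hsurj : Function.Surjective (Submodule.restrictScalarsEmbedding R A M) := fun q =>
    ⟨Submodule.span A q, by
      rw [Submodule.restrictScalarsEmbedding_apply, Submodule.restrictScalars_span R A h,
        Submodule.span_eq]⟩
  exact (Submodule.restrictScalarsEmbedding R A M).rank_gt_apply_of_isUpperSet
    (hsurj.range_eq ▸ isUpperSet_univ) ⊥

section CommRing

variable {T : Type u} [CommRing T]

theorem ringKrullDim_quotient_add_one_le_of_lt {P J : Ideal T} [P.IsPrime] (h : P < J) :
    ringKrullDim (T ⧸ J) + 1 ≤ ringKrullDim (T ⧸ P) := by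
  obtain ⟨r, hrJ, hrP⟩ := SetLike.exists_of_lt h
  have hr : Ideal.Quotient.mk P r ∈ nonZeroDivisors (T ⧸ P) :=
    mem_nonZeroDivisors_of_ne_zero (Ideal.Quotient.eq_zero_iff_mem.not.2 hrP)
  exact ringKrullDim_succ_le_of_surjective _ (Ideal.Quotient.factor_surjective h.le) hr
    (Ideal.Quotient.eq_zero_iff_mem.2 hrJ)

variable [IsNoetherianRing T]

theorem Ideal.exists_moduleLength_quotient_le_nadd {I : Ideal T} (hI : I ≠ ⊤)
    (hIp : ¬ I.IsPrime) : ∃ J₁ J₂ : Ideal T, I < J₁ ∧ I < J₂ ∧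
      moduleLength T (T ⧸ I) ≤ moduleLength T (T ⧸ J₁) ♯ moduleLength T (T ⧸ J₂) := by
  obtain ⟨a, b, hab, ha, hb⟩ : ∃ a b, a * b ∈ I ∧ a ∉ I ∧ b ∉ I := by
    simpa [Ideal.isPrime_iff, hI, not_or] using hIp
  -- `ker g = (I : a)` and `ker h = I + (a)`.
  let g := LinearMap.toSpanSingleton T (T ⧸ I) (Ideal.Quotient.mk I a)
  let h := (LinearMap.range g).mkQ ∘ₗ I.mkQ
  have hg : ∀ r, g r = Ideal.Quotient.mk I (r * a) := fun r => by
    simp [g, Algebra.smul_def]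
  have hh : Function.Surjective h :=
    (Submodule.mkQ_surjective _).comp (Submodule.mkQ_surjective _)
  refine ⟨LinearMap.ker g, LinearMap.ker h,
    SetLike.lt_iff_le_and_exists.2 ⟨fun r hr => ?_, b, ?_, hb⟩,
    SetLike.lt_iff_le_and_exists.2 ⟨fun r hr => ?_, a, ?_, ha⟩, ?_⟩
  · rw [LinearMap.mem_ker, hg, Ideal.Quotient.eq_zero_iff_mem]
    exact I.mul_mem_right a hr
  · rw [LinearMap.mem_ker, hg, Ideal.Quotient.eq_zero_iff_mem, mul_comm]
    exact hab
  · simpa [h] using ⟨0, by rw [map_zero, eq_comm, Ideal.Quotient.eq_zero_iff_mem]; exact hr⟩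
  · simpa [h] using ⟨1, by rw [hg, one_mul]⟩
  · calc moduleLength T (T ⧸ I)
        ≤ moduleLength T (LinearMap.range g) ♯
            moduleLength T ((T ⧸ I) ⧸ LinearMap.range g) :=
          moduleLength_le_nadd _
      _ = _ := by
          rw [g.quotKerEquivRange.moduleLength_eq, (h.quotKerEquivOfSurjective hh).moduleLength_eq]

theorem omega0_opow_length_le_moduleLength_quotient_head (l : LTSeries (PrimeSpectrum T)) :
    ω ^ (l.length : Ordinal) ≤ moduleLength T (T ⧸ l.head.asIdeal) := by
  induction l using RelSeries.inductionOn with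
  | singleton p =>
    have : Nontrivial (T ⧸ p.asIdeal) := Ideal.Quotient.nontrivial_iff.2 p.isPrime.ne_top
    simpa using one_le_moduleLength
  | cons l p hp ih =>
    set P := p.asIdeal
    set Q := l.head.asIdeal
    have hPQ : P < Q := hp
    obtain ⟨x, hxQ, hxP⟩ := SetLike.exists_of_lt hPQ
    let f := LinearMap.mulLeft T (Ideal.Quotient.mk P x)
    have hf : Function.Injective f :=
      mul_right_injective₀ (Ideal.Quotient.eq_zero_iff_mem.not.2 hxP)
    have hrange : LinearMap.range f ≤ Submodule.map P.mkQ Q := by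
      rintro _ ⟨m, rfl⟩
      obtain ⟨t, rfl⟩ := Ideal.Quotient.mk_surjective m
      exact ⟨x * t, Q.mul_mem_right t hxQ, rfl⟩
    calc ω ^ ((l.cons p hp).length : Ordinal) = ω ^ (l.length : Ordinal) * ω := by
          rw [RelSeries.cons_length, Nat.cast_succ, opow_add_one]
      _ ≤ moduleLength T (T ⧸ Q) * ω := by gcongr
      _ = moduleLength T ((T ⧸ P) ⧸ Submodule.map P.mkQ Q) * ω := by
          rw [(Submodule.quotientQuotientEquivQuotient P Q hPQ.le).moduleLength_eq]
      _ ≤ moduleLength T ((T ⧸ P) ⧸ LinearMap.range f) * ω := by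
          gcongr; exact moduleLength_quotient_antitone hrange
      _ ≤ moduleLength T (T ⧸ (l.cons p hp).head.asIdeal) :=
          LinearMap.moduleLength_quotient_range_mul_omega0_le hf

theorem moduleLength_quotient_le_omega0_opow_of_isPrime {n : ℕ}
    (ih : ∀ (S : Type u) [CommRing S] [IsNoetherianRing S],
      ringKrullDim S < n → moduleLength S S < ω ^ (n : Ordinal))
    (hT : ringKrullDim T < n + 1) (P : Ideal T) [P.IsPrime] :
    moduleLength T (T ⧸ P) ≤ ω ^ (n : Ordinal) := by
  refine moduleLength_quotient_le_iff.2 fun J hPJ => ?_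
  rw [moduleLength_eq_of_surjective_algebraMap (Ideal.Quotient.mk_surjective (I := J))]
  exact ih _ <| lt_of_add_lt_add_right <|
    (ringKrullDim_quotient_add_one_le_of_lt hPJ).trans_lt <|
      (ringKrullDim_quotient_le P).trans_lt hT

end CommRing

theorem moduleLength_lt_omega0_opow_of_ringKrullDim_lt (n : ℕ) :
    ∀ (T : Type u) [CommRing T] [IsNoetherianRing T],
      ringKrullDim T < n → moduleLength T T < ω ^ (n : Ordinal) := by
  induction n with
  | zero =>
    intro T _ _ hT
    have : Subsingleton T := not_nontrivial_iff_subsingleton.1 fun _ =>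
      ringKrullDim_nonneg_of_nontrivial.not_gt (by exact_mod_cast hT)
    simp [moduleLength_eq_zero]
  | succ n ih =>
    intro T _ _ hT
    push_cast at hT
    suffices ∀ I : Ideal T, moduleLength T (T ⧸ I) < ω ^ ((n + 1 : ℕ) : Ordinal) by
      have h := this ⊥
      rwa [moduleLength_quotient] at h
    intro I
    induction I using WellFoundedGT.induction with | _ I ihI =>
    by_cases hsplit : I ≠ ⊤ ∧ ¬ I.IsPrime
    · obtain ⟨J₁, J₂, h₁, h₂, hle⟩ :=
        I.exists_moduleLength_quotient_le_nadd hsplit.1 hsplit.2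
      exact hle.trans_lt (nadd_lt_omega0_opow (ihI J₁ h₁) (ihI J₂ h₂))
    by_cases htop : I = ⊤
    · subst htop
      rw [moduleLength_eq_zero]
      exact opow_pos _ omega0_pos
    have : I.IsPrime := by tauto
    refine (moduleLength_quotient_le_omega0_opow_of_isPrime ih hT I).trans_lt ?_
    exact (opow_lt_opow_iff_right one_lt_omega0).2 (by exact_mod_cast n.lt_succ_self)

theorem moduleLength_eq_omega_pow_iff_general
    (R : Type u) [CommRing R] [IsNoetherianRing R] (d : ℕ) :
    moduleLength R R = ω ^ (d : Ordinal) ↔ IsDomain R ∧ ringKrullDim R = d := by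
  have lower (l : LTSeries (PrimeSpectrum R)) : ω ^ (l.length : Ordinal) ≤ moduleLength R R :=
    (omega0_opow_length_le_moduleLength_quotient_head l).trans (moduleLength_quotient_le _)
  constructor
  · intro h
    have hlt : ringKrullDim R < (d + 1 : ℕ) := Order.krullDim_lt_coe_iff.2 fun l => by
      have := (opow_le_opow_iff_right one_lt_omega0).1 (h ▸ lower l)
      exact Nat.lt_succ_of_le (by exact_mod_cast this)
    have hge : (d : WithBot ℕ∞) ≤ ringKrullDim R :=
      not_lt.1 fun hlt => (moduleLength_lt_omega0_opow_of_ringKrullDim_lt d R hlt).ne h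
    refine ⟨?_, le_antisymm (ENat.WithBot.lt_add_one_iff.1 (by exact_mod_cast hlt)) hge⟩
    obtain ⟨l, hl⟩ := Order.le_krullDim_iff.1 hge
    have hbot : l.head.asIdeal = ⊥ := by
      by_contra hne
      have : Nontrivial l.head.asIdeal := Submodule.nontrivial_iff_ne_bot.2 hne
      have hsum := (add_le_add (hl ▸ omega0_opow_length_le_moduleLength_quotient_head l)
        one_le_moduleLength).trans (moduleLength_quotient_add_moduleLength_le _)
      exact (h ▸ hsum).not_gt (lt_add_one _)
    have : (⊥ : Ideal R).IsPrime := hbot ▸ l.head.isPrime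
    exact IsDomain.of_bot_isPrime R
  · rintro ⟨_, hdim⟩
    obtain ⟨l, hl⟩ := Order.le_krullDim_iff.1 hdim.ge
    refine le_antisymm ?_ (hl ▸ lower l)
    have := moduleLength_quotient_le_omega0_opow_of_isPrime
      (moduleLength_lt_omega0_opow_of_ringKrullDim_lt d)
      (hdim.le.trans_lt (ENat.WithBot.lt_add_one_iff.2 le_rfl)) ⊥
    rwa [moduleLength_quotient] at this

/-- A finite-dimensional Noetherian ring has ordinal length `ω ^ d` if and only if it is a
`d`-dimensional integral domain. -/
theorem moduleLength_eq_omega_pow_iff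
    (R : Type u) [CommRing R] [IsNoetherianRing R] (hdim : ringKrullDim R < ⊤) (d : ℕ) :
    moduleLength R R = ω ^ (d : Ordinal) ↔ IsDomain R ∧ ringKrullDim R = d :=
  moduleLength_eq_omega_pow_iff_general R d
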